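/- With π^{(n)}_i = r^{i−1}(1−r)/(1−r^n) on {1,…,n} where r = δ/(1−δ) and 1/2 < δ < 1 (so r > 1): for every fixed i, lim_{n→∞} π^{(n)}_i = 0, but lim_{n→∞} max_{1≤i≤n} π^{(n)}_i = lim_{n→∞} π^{(n)}_n = 1 − 1/r > 0. Hence the sequence is weakly democratic but not democratic. -/

import Mathlib

open scoped ENNReal

/-- Probability of the trajectory `i, w 0, w 1, …, w t` under kernel `P`. -/
noncomputable def pathP {V : Type*} (P : V → V → ℝ) (i : V) (t : ℕ)
    (w : Fin (t + 1) → V) : ℝ≥0∞ :=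
  ENNReal.ofReal (P i (w 0)) * ∏ s : Fin t, ENNReal.ofReal (P (w s.castSucc) (w s.succ))

open Classical in
/-- Probability that, started at `i`, the chain hits `S` for the first time at time `t+1`. -/
noncomputable def firstHit {V : Type*} (P : V → V → ℝ) (i : V) (S : Set V) (t : ℕ) : ℝ≥0∞ :=
  ∑' w : Fin (t + 1) → V,
    if w (Fin.last t) ∈ S ∧ ∀ s : Fin t, w s.castSucc ∉ S then pathP P i t w else 0

/-- Expected first return time to `i` (computed on the event that the return time is finite). -/
noncomputable def expRet {V : Type*} (P : V → V → ℝ) (i : V) : ℝ≥0∞ :=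
  ∑' t : ℕ, ((t : ℝ≥0∞) + 1) * firstHit P i {i} t

/-- Probability of ever returning to `i`. -/
noncomputable def retProb {V : Type*} (P : V → V → ℝ) (i : V) : ℝ≥0∞ :=
  ∑' t : ℕ, firstHit P i {i} t

open Classical in
/-- Expected hitting time of the set `S` starting from `i`. -/
noncomputable def expHit {V : Type*} (P : V → V → ℝ) (i : V) (S : Set V) : ℝ≥0∞ :=
  if i ∈ S then 0 else ∑' t : ℕ, ((t : ℝ≥0∞) + 1) * firstHit P i S t

open Classical in
/-- Probability that, started at `i`, the chain returns to `i` at time `t+1`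
while having stayed inside the set `B` the whole time. -/
noncomputable def firstRetIn {V : Type*} (P : V → V → ℝ) (i : V) (B : Set V) (t : ℕ) : ℝ≥0∞ :=
  ∑' w : Fin (t + 1) → V,
    if (∀ s : Fin (t + 1), w s ∈ B) ∧ w (Fin.last t) = i ∧ ∀ s : Fin t, w s.castSucc ≠ i
    then pathP P i t w else 0

/-- `reachLe P k a b`: `b` is reachable from `a` in at most `k` steps of the directed
graph of `P`. -/
def reachLe {V : Type*} (P : V → V → ℝ) : ℕ → V → V → Prop
  | 0, a, b => a = b
  | (k + 1), a, b => reachLe P k a b ∨ ∃ c, reachLe P k a c ∧ 0 < P c b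

/-- The ball of radius `R` around `i` in the directed graph of `P`. -/
def ball {V : Type*} (P : V → V → ℝ) (i : V) (R : ℕ) : Set V := {v | reachLe P R i v}

/-!
Since `r > 1`, write `π⁽ⁿ⁾ᵢ = r^(i-1) (r-1)/(rⁿ-1)`. The denominator tends to infinity, so every
fixed coordinate vanishes in the limit, while dividing through by `rⁿ` shows the top coordinate
equals `(1 - r⁻¹)/(1 - r⁻ⁿ)`, which tends to `1 - r⁻¹ > 0`.
-/

open Filter Topology

lemma one_lt_div_one_sub_of_half_lt {δ : ℝ} (hδhalf : 1 / 2 < δ) (hδ1 : δ < 1) :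
    1 < δ / (1 - δ) := by
  rw [lt_div_iff₀ (by linarith)]
  linarith

section OrderedField

variable {𝕜 : Type*} [Field 𝕜] [LinearOrder 𝕜] [IsStrictOrderedRing 𝕜]

-- Also at `n = 0`, where the denominator vanishes and the quotient is `0`.
lemma one_sub_div_one_sub_pow_nonneg {r : 𝕜} (hr : 1 ≤ r) (n : ℕ) :
    0 ≤ (1 - r) / (1 - r ^ n) :=
  div_nonneg_of_nonpos (sub_nonpos.2 hr) (sub_nonpos.2 (one_le_pow₀ hr))

lemma pow_mul_one_sub_div_one_sub_pow_le {r : 𝕜} (hr : 1 ≤ r) {j k : ℕ} (hjk : j ≤ k) (n : ℕ) :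
    r ^ j * (1 - r) / (1 - r ^ n) ≤ r ^ k * (1 - r) / (1 - r ^ n) := by
  simp only [mul_div_assoc]
  exact mul_le_mul_of_nonneg_right (pow_le_pow_right₀ hr hjk)
    (one_sub_div_one_sub_pow_nonneg hr n)

lemma pow_mul_one_sub_div_one_sub_pow_succ {r : 𝕜} (hr : 1 < r) (m : ℕ) :
    r ^ m * (1 - r) / (1 - r ^ (m + 1)) = (1 - r⁻¹) / (1 - r⁻¹ ^ (m + 1)) := by
  have hpow : 1 - r ^ (m + 1) ≠ 0 := sub_ne_zero.2 (one_lt_pow₀ hr m.succ_ne_zero).ne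
  have hinv : 1 - r⁻¹ ^ (m + 1) ≠ 0 :=
    sub_ne_zero.2 (pow_lt_one₀ (by positivity) (inv_lt_one_of_one_lt₀ hr) m.succ_ne_zero).ne'
  rw [div_eq_div_iff hpow hinv, inv_pow]
  field_simp
  ring

variable [TopologicalSpace 𝕜] [OrderTopology 𝕜] [Archimedean 𝕜]

lemma tendsto_div_one_sub_pow_atTop_zero {r : 𝕜} (hr : 1 < r) (c : 𝕜) :
    Tendsto (fun n : ℕ => c / (1 - r ^ n)) atTop (𝓝 0) :=
  tendsto_const_nhds.div_atBot <| by
    simpa [sub_eq_add_neg] using tendsto_atBot_add_const_left _ 1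
      (tendsto_neg_atTop_atBot.comp (tendsto_pow_atTop_atTop_of_one_lt hr))

lemma tendsto_one_sub_div_one_sub_pow {q : 𝕜} (hq0 : 0 ≤ q) (hq1 : q < 1) :
    Tendsto (fun n : ℕ => (1 - q) / (1 - q ^ n)) atTop (𝓝 (1 - q)) := by
  have hden : Tendsto (fun n : ℕ => 1 - q ^ n) atTop (𝓝 1) := by
    simpa using tendsto_const_nhds.sub (tendsto_pow_atTop_nhds_zero_of_lt_one hq0 hq1)
  simpa [Pi.div_def] using tendsto_const_nhds.div hden one_ne_zero

lemma tendsto_pow_pred_mul_one_sub_div_one_sub_pow {r : 𝕜} (hr : 1 < r) :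
    Tendsto (fun n : ℕ => r ^ (n - 1) * (1 - r) / (1 - r ^ n)) atTop (𝓝 (1 - r⁻¹)) := by
  refine (tendsto_one_sub_div_one_sub_pow (inv_nonneg.2 (by linarith))
    (inv_lt_one_of_one_lt₀ hr)).congr' ?_
  filter_upwards [eventually_ge_atTop 1] with n hn
  obtain ⟨m, rfl⟩ := Nat.exists_eq_add_of_le' hn
  rw [Nat.add_sub_cancel, pow_mul_one_sub_div_one_sub_pow_succ hr]

end OrderedField

/-- For `1/2 < δ < 1` and `r = δ/(1-δ) > 1`, each fixed coordinate of
`π⁽ⁿ⁾ᵢ = r^(i-1)(1-r)/(1-rⁿ)` tends to `0`, yet the maximum coordinate, attained at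
`i = n`, tends to `1 - 1/r > 0`: the sequence is weakly democratic but not democratic. -/
theorem stmt6 (δ : ℝ) (hδhalf : 1 / 2 < δ) (hδ1 : δ < 1) (r : ℝ) (hr : r = δ / (1 - δ)) :
    (∀ i : ℕ, 1 ≤ i →
      Filter.Tendsto (fun n : ℕ => r ^ (i - 1) * (1 - r) / (1 - r ^ n)) Filter.atTop
        (nhds 0)) ∧
    (∀ n i : ℕ, 1 ≤ i → i ≤ n →
      r ^ (i - 1) * (1 - r) / (1 - r ^ n) ≤ r ^ (n - 1) * (1 - r) / (1 - r ^ n)) ∧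
    Filter.Tendsto (fun n : ℕ => r ^ (n - 1) * (1 - r) / (1 - r ^ n)) Filter.atTop
      (nhds (1 - 1 / r)) ∧
    0 < 1 - 1 / r := by
  have hr1 : 1 < r := hr ▸ one_lt_div_one_sub_of_half_lt hδhalf hδ1
  rw [one_div]
  exact ⟨fun i _ => tendsto_div_one_sub_pow_atTop_zero hr1 _,
    fun n i _ hin => pow_mul_one_sub_div_one_sub_pow_le hr1.le (by omega) n,
    tendsto_pow_pred_mul_one_sub_div_one_sub_pow hr1,
    sub_pos.2 (inv_lt_one_of_one_lt₀ hr1)⟩
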